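/- If f : K → L is a morphism of precubical sets over !^σΣ with K₀ = [p₁], L₀ = [p₂], and f₀ : [p₁] → [p₂] a morphism of the cube category □, then composing any non-twisted σ-labelled n-shell of K with f yields a non-twisted σ-labelled n-shell of L. -/
import Mathlib


/-- The predicate on set maps `{0,1}ᵖ → {0,1}^q` of being a morphism of the cube
category `□`, i.e. a (possibly empty) composite of coface maps
`δᵢᵅ = Fin.insertNth i α`. -/
inductive IsCubeMap : ∀ {p q : ℕ}, ((Fin p → Bool) → (Fin q → Bool)) → Prop
  | id {n : ℕ} : IsCubeMap (id : (Fin n → Bool) → (Fin n → Bool))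
  | comp_delta {p q : ℕ} (f : (Fin p → Bool) → (Fin q → Bool)) (i : Fin (q + 1)) (α : Bool)
      (hf : IsCubeMap f) : IsCubeMap (fun ε => Fin.insertNth i α (f ε))

/-- The position of the first occurrence of the value `v` in the list
`idx 0, idx 1, …` (reading from the left to the right). -/
noncomputable def firstOcc {q m : ℕ} (idx : Fin q → Fin m) (v : Fin m) : ℕ :=
  sInf {k : ℕ | ∃ h : k < q, idx ⟨k, h⟩ = v}

/-- `(idx, ψ)` is a non-twisted factorization of the set map
`x : [n+1] → [p]`: `x = ψ ∘ φ` where `ψ : [q] → [p]` is a morphism of the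
cube category, `φ(ε₁,…,ε_{n+1}) = (ε_{i₁},…,ε_{i_q})` (i.e.
`φ(ε) k = ε (idx k)`) with `{1,…,n+1} ⊆ {i₁,…,i_q}` (surjectivity of `idx`)
and the first occurrence of `εᵢ` preceding the first occurrence of `ε_{i+1}`,
reading from the left to the right. -/
def NonTwistedFactor {n p q : ℕ} (x : (Fin (n + 1) → Bool) → (Fin p → Bool))
    (idx : Fin q → Fin (n + 1)) (ψ : (Fin q → Bool) → (Fin p → Bool)) : Prop :=
  IsCubeMap ψ ∧ Function.Surjective idx ∧
    (∀ i : Fin n, firstOcc idx i.castSucc < firstOcc idx i.succ) ∧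
    x = fun ε => ψ (fun k => ε (idx k))

/-- A set map `x : [n+1] → [p]` is non-twisted if it admits a non-twisted
factorization. -/
def NonTwisted {n p : ℕ} (x : (Fin (n + 1) → Bool) → (Fin p → Bool)) : Prop :=
  ∃ (q : ℕ) (idx : Fin q → Fin (n + 1)) (ψ : (Fin q → Bool) → (Fin p → Bool)),
    NonTwistedFactor x idx ψ

inductive SyncElt (Lbl : Type*) where
  | bot : SyncElt Lbl
  | zero : SyncElt Lbl
  | act : Lbl → SyncElt Lbl

structure SyncAlgebra (Lbl : Type*) where
  op : SyncElt Lbl → SyncElt Lbl → SyncElt Lbl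
  comm : ∀ x y, op x y = op y x
  assoc : ∀ x y z, op (op x y) z = op x (op y z)
  op_bot : ∀ x, x ≠ SyncElt.zero → op x SyncElt.bot = SyncElt.bot
  op_eq_zero_iff : ∀ x y, op x y = SyncElt.zero ↔ x = SyncElt.zero ∧ y = SyncElt.zero
  act_zero : ∀ a : Lbl, op (SyncElt.act a) SyncElt.zero = SyncElt.act a ∨
    op (SyncElt.act a) SyncElt.zero = SyncElt.bot

/-- A 1-dimensional `σ`-labelled precubical set: a set `V` of `0`-cubes (states),
a set `E` of `1`-cubes with source `s`, target `t`, and a labelling map to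
`!^σΣ` in dimension `1`, i.e. every `1`-cube is labelled by an action `a ∈ Σ`
(`lab_act`) which may run asynchronously (`lab_ok`: `σ(a,0) = a`). -/
structure LPC1 (Lbl : Type*) (S : SyncAlgebra Lbl) where
  V : Type*

/-- A precubical set: a family of sets of `n`-cubes together with face maps
`∂ᵢᵅ` satisfying the cubical relations. -/
structure PrecubSet where
  cube : ℕ → Type
  face : ∀ n, Fin (n + 1) → Bool → cube (n + 1) → cube n
  rel : ∀ (n : ℕ) (i j : Fin (n + 1)), i ≤ j → ∀ (α β : Bool) (x : cube (n + 2)),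
    face n i α (face (n + 1) j.succ β x) = face n j β (face (n + 1) i.castSucc α x)

/-- A `σ`-labelled precubical set: a precubical set together with a labelling
map to `!^σΣ`, i.e. every `n`-cube carries an `n`-tuple of labels, compatibly
with the face maps, each label satisfying `σ(a,0) = a`. -/
structure LabPrecub (Lbl : Type) (S : SyncAlgebra Lbl) extends PrecubSet where
  lab : ∀ n, cube n → (Fin n → Lbl)
  lab_face : ∀ (n : ℕ) (i : Fin (n + 1)) (α : Bool) (x : cube (n + 1)),
    lab n (face n i α x) = fun j => lab (n + 1) x (i.succAbove j)
  lab_ok : ∀ (n : ℕ) (x : cube n) (i : Fin n),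
    S.op (SyncElt.act (lab n x i)) SyncElt.zero = SyncElt.act (lab n x i)

/-- A morphism of `σ`-labelled precubical sets (a commutative triangle over
`!^σΣ`). -/
structure LabHom {Lbl : Type} {S : SyncAlgebra Lbl} (K L : LabPrecub Lbl S) where
  app : ∀ n, K.cube n → L.cube n
  face_comm : ∀ (n : ℕ) (i : Fin (n + 1)) (α : Bool) (x : K.cube (n + 1)),
    app n (K.face n i α x) = L.face n i α (app (n + 1) x)
  lab_comm : ∀ (n : ℕ) (x : K.cube n), L.lab n (app n x) = K.lab n x

/-- The vertex of the cube `x` at the corner `v ∈ {0,1}ⁿ`, obtained by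
iterating face maps. -/
def PrecubSet.vertex (K : PrecubSet) : ∀ n, K.cube n → (Fin n → Bool) → K.cube 0
  | 0, x, _ => x
  | n + 1, x, v => K.vertex n (K.face n 0 (v 0) x) (fun j => v j.succ)

/-- A `σ`-labelled `(m+1)`-shell of `K`: a map `∂□[m+2] → K` of precubical
sets over `!^σΣ` which extends over `□[m+2]` on labels.  It is given by its
`2(m+2)` top-dimensional faces `c i α`, subject to the cubical compatibility
relations, together with a common label tuple `ℓ` extending the labels of all
the faces. -/
structure Shell {Lbl : Type} {S : SyncAlgebra Lbl} (K : LabPrecub Lbl S) (m : ℕ) where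
  c : Fin (m + 2) → Bool → K.cube (m + 1)
  compat : ∀ (i j : Fin (m + 1)), i ≤ j → ∀ (α β : Bool),
    K.face m i α (c j.succ β) = K.face m j β (c i.castSucc α)
  ℓ : Fin (m + 2) → Lbl
  lab_c : ∀ (i : Fin (m + 2)) (α : Bool),
    K.lab (m + 1) (c i α) = fun j => ℓ (i.succAbove j)
  ℓ_ok : ∀ i, S.op (SyncElt.act (ℓ i)) SyncElt.zero = SyncElt.act (ℓ i)

/-- The map `x₀ : [m+2] → K₀` underlying a shell, sending each corner of
`∂□[m+2]` to the corresponding `0`-cube of `K`. -/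
def Shell.vertexMap {Lbl : Type} {S : SyncAlgebra Lbl} {K : LabPrecub Lbl S} {m : ℕ}
    (sh : Shell K m) : (Fin (m + 2) → Bool) → K.cube 0 :=
  fun v => K.toPrecubSet.vertex (m + 1) (sh.c 0 (v 0)) (fun j => v j.succ)

/-- Composing a shell of `K` with a morphism `f : K → L` of `σ`-labelled
precubical sets yields a shell of `L`. -/
def Shell.map {Lbl : Type} {S : SyncAlgebra Lbl} {K L : LabPrecub Lbl S} {m : ℕ}
    (f : LabHom K L) (sh : Shell K m) : Shell L m where
  c := fun i α => f.app (m + 1) (sh.c i α)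
  compat := by
    intro i j hij α β
    rw [← f.face_comm, ← f.face_comm, sh.compat i j hij α β]
  ℓ := sh.ℓ
  lab_c := by
    intro i α
    rw [f.lab_comm, sh.lab_c]
  ℓ_ok := sh.ℓ_ok

theorem cubeMap_comp {p q r : ℕ} {g : (Fin q → Bool) → (Fin r → Bool)}
    {ψ : (Fin p → Bool) → (Fin q → Bool)} (hg : IsCubeMap g) (hψ : IsCubeMap ψ) :
    IsCubeMap (fun v => g (ψ v)) := by
  induction hg with
  | id => exact hψ
  | comp_delta f i α hf ih => exact IsCubeMap.comp_delta _ i α ih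

/-- If `f : K → L` is a morphism of `σ`-labelled precubical sets with
`K₀ = [p₁]`, `L₀ = [p₂]`, whose restriction `f₀ : [p₁] → [p₂]` to `0`-cubes
is a morphism of the cube category `□`, then composing any non-twisted
`σ`-labelled shell of `K` with `f` yields a non-twisted `σ`-labelled shell
of `L`. -/
theorem shell_map_nonTwisted {Lbl : Type} [Nonempty Lbl] {S : SyncAlgebra Lbl}
    {K L : LabPrecub Lbl S} {p₁ p₂ : ℕ}
    (hK : K.cube 0 = (Fin p₁ → Bool)) (hL : L.cube 0 = (Fin p₂ → Bool))
    (f : LabHom K L)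
    (hf : IsCubeMap (fun v => Equiv.cast hL (f.app 0 ((Equiv.cast hK).symm v))))
    {m : ℕ} (sh : Shell K m)
    (hsh : NonTwisted (fun v => Equiv.cast hK (sh.vertexMap v))) :
    NonTwisted (fun v => Equiv.cast hL ((Shell.map f sh).vertexMap v)) := by
  have hvert : ∀ (n : ℕ) (x : K.cube n) (v : Fin n → Bool),
      f.app 0 (K.toPrecubSet.vertex n x v) = L.toPrecubSet.vertex n (f.app n x) v := by
    intro n
    induction n with
    | zero => intro x v; rfl
    | succ n ih =>
      intro x v
      simp only [PrecubSet.vertex, ih, f.face_comm]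
  obtain ⟨q, idx, ψ, hψ, hsurj, hord, heq⟩ := hsh
  refine ⟨q, idx, fun w => Equiv.cast hL (f.app 0 ((Equiv.cast hK).symm (ψ w))),
    cubeMap_comp hf hψ, hsurj, hord, ?_⟩
  funext v
  have : (Shell.map f sh).vertexMap v = f.app 0 (sh.vertexMap v) := by
    simp [Shell.vertexMap, Shell.map, hvert]
  rw [this]
  have := congrFun heq v
  simp only [← this, Equiv.symm_apply_apply]
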